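/- arXiv:2311.03326 — 2 statements merged into one kernel-verified Lean document; each statement's English description precedes it below -/
import Mathlib

section
/- For every pair of strategy profiles differing only in player i's strategy, the change in player i's payoff J_i(x_i, x_{-i}) = Σ_{j∈N_i} (‖x_i − x_j‖² − d_{ij}²)² equals the change in the potential function P(x) = Σ_{(i,j)∈E} (‖x_i − x_j‖² − d_{ij}²)². That is, P(x_i', x_{-i}) − P(x_i, x_{-i}) = J_i(x_i', x_{-i}) − J_i(x_i, x_{-i}). -/
open Finset

/-- Potential game property for the SNL game: a unilateral deviation by player `i`
changes the potential `P` by exactly the change in `i`'s payoff `J i`. -/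
theorem stmt0 (n K : ℕ) (E : Finset (Fin K × Fin K))
    (hsym : ∀ p ∈ E, (p.2, p.1) ∈ E) (hirr : ∀ p ∈ E, p.1 ≠ p.2)
    (d : Fin K → Fin K → ℝ) (hdsym : ∀ i j, d i j = d j i)
    (hd0 : ∀ p ∈ E, 0 ≤ d p.1 p.2)
    (J : Fin K → (Fin K → EuclideanSpace ℝ (Fin n)) → ℝ)
    (hJ : ∀ i x, J i x =
      ∑ p ∈ E.filter (fun p => p.1 = i), (‖x i - x p.2‖ ^ 2 - (d i p.2) ^ 2) ^ 2)
    (P : (Fin K → EuclideanSpace ℝ (Fin n)) → ℝ)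
    (hP : ∀ x, P x =
      ∑ p ∈ E.filter (fun p => p.1 < p.2), (‖x p.1 - x p.2‖ ^ 2 - (d p.1 p.2) ^ 2) ^ 2)
    (i : Fin K) (x x' : Fin K → EuclideanSpace ℝ (Fin n))
    (hdev : ∀ j, j ≠ i → x' j = x j) :
    P x' - P x = J i x' - J i x := by
  classical
  set g : Fin K × Fin K → ℝ := fun p =>
    (‖x' p.1 - x' p.2‖ ^ 2 - d p.1 p.2 ^ 2) ^ 2 -
      (‖x p.1 - x p.2‖ ^ 2 - d p.1 p.2 ^ 2) ^ 2 with hg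
  have hgswap : ∀ p : Fin K × Fin K, g (p.2, p.1) = g p := by
    intro p
    simp only [hg]
    rw [hdsym p.2 p.1, norm_sub_rev (x' p.2), norm_sub_rev (x p.2)]
  have hgzero : ∀ p : Fin K × Fin K, p.1 ≠ i → p.2 ≠ i → g p = 0 := by
    intro p h1 h2
    simp [hg, hdev _ h1, hdev _ h2]
  have hP' : P x' - P x = ∑ p ∈ E.filter (fun p => p.1 < p.2), g p := by
    rw [hP, hP, ← Finset.sum_sub_distrib]
  have hJ' : J i x' - J i x = ∑ p ∈ E.filter (fun p => p.1 = i), g p := by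
    rw [hJ, hJ, ← Finset.sum_sub_distrib]
    apply Finset.sum_congr rfl
    intro p hp
    have h1 : p.1 = i := (Finset.mem_filter.mp hp).2
    simp [hg, h1]
  rw [hP', hJ']
  -- restrict P-sum to edges touching i
  have hPres : ∑ p ∈ E.filter (fun p => p.1 < p.2), g p
      = ∑ p ∈ (E.filter (fun p => p.1 < p.2)).filter
          (fun p => p.1 = i ∨ p.2 = i), g p := by
    refine (Finset.sum_filter_of_ne ?_).symm
    intro p _ hne
    by_contra h
    push_neg at h
    exact hne (hgzero p h.1 h.2)
  have hsetP : (E.filter (fun p => p.1 < p.2)).filter (fun p => p.1 = i ∨ p.2 = i)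
      = E.filter (fun p => p.1 = i ∧ i < p.2) ∪ E.filter (fun p => p.2 = i ∧ p.1 < i) := by
    ext p
    simp only [Finset.mem_filter, Finset.mem_union, Finset.filter_filter]
    constructor
    · rintro ⟨hE, hlt, (h1 | h2)⟩
      · exact Or.inl ⟨hE, h1, h1 ▸ hlt⟩
      · exact Or.inr ⟨hE, h2, h2 ▸ hlt⟩
    · rintro (⟨hE, h1, hlt⟩ | ⟨hE, h2, hlt⟩)
      · exact ⟨hE, h1 ▸ hlt, Or.inl h1⟩
      · exact ⟨hE, h2 ▸ hlt, Or.inr h2⟩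
  have hdisj : Disjoint (E.filter (fun p => p.1 = i ∧ i < p.2))
      (E.filter (fun p => p.2 = i ∧ p.1 < i)) := by
    rw [Finset.disjoint_left]
    intro p hp hq
    simp only [Finset.mem_filter] at hp hq
    exact absurd (hq.2.1 ▸ hp.2.2) (lt_irrefl i)
  have hsetJ : E.filter (fun p => p.1 = i)
      = E.filter (fun p => p.1 = i ∧ i < p.2) ∪ E.filter (fun p => p.1 = i ∧ p.2 < i) := by
    ext p
    simp only [Finset.mem_filter, Finset.mem_union]
    constructor
    · rintro ⟨hE, h1⟩
      rcases lt_or_gt_of_ne (fun h : p.2 = i => hirr p hE (h1.trans h.symm)) with h | h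
      · exact Or.inr ⟨hE, h1, h⟩
      · exact Or.inl ⟨hE, h1, h⟩
    · rintro (⟨hE, h1, _⟩ | ⟨hE, h1, _⟩) <;> exact ⟨hE, h1⟩
  have hdisjJ : Disjoint (E.filter (fun p => p.1 = i ∧ i < p.2))
      (E.filter (fun p => p.1 = i ∧ p.2 < i)) := by
    rw [Finset.disjoint_left]
    intro p hp hq
    simp only [Finset.mem_filter] at hp hq
    exact absurd (hp.2.2.trans hq.2.2) (lt_irrefl i)
  have hBC : ∑ p ∈ E.filter (fun p => p.2 = i ∧ p.1 < i), g p
      = ∑ p ∈ E.filter (fun p => p.1 = i ∧ p.2 < i), g p := by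
    apply Finset.sum_nbij' Prod.swap Prod.swap
    · intro p hp
      simp only [Finset.mem_filter] at hp ⊢
      exact ⟨hsym p hp.1, hp.2.1, hp.2.2⟩
    · intro p hp
      simp only [Finset.mem_filter] at hp ⊢
      exact ⟨hsym p hp.1, hp.2.1, hp.2.2⟩
    · intro p _; rfl
    · intro p _; rfl
    · intro p _
      exact (hgswap p).symm
  rw [hPres, hsetP, Finset.sum_union hdisj, hsetJ, Finset.sum_union hdisjJ, hBC]
end

section
/- Let x⋆ ∈ Ω (Ω = Π_i Ω_i convex) and suppose there exists τ⋆ ∈ ℝ^q such that (x⋆, τ⋆) is a stationary point of Ψ(x, τ): 0 ∈ ∇_x [τ⋆ᵀ Λ(x⋆)] + N_Ω(x⋆) and Λ(x⋆) = ∇Φ*(τ⋆), where Λ(x)_{(i,j)} = ‖x_i − x_j‖². Then x⋆ is a Nash stationary point of the SNL game: for each player i, 0 ∈ ∇_{x_i} J_i(x_i⋆, x_{-i}⋆) + N_{Ω_i}(x_i⋆). -/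
open Finset

/-!
Along player `i`'s coordinate, `∇J_i = ∑_{e ∋ i} 2 (Λ_e - d_e²) ∇Λ_e`, and the dual stationarity
`Λ(x⋆) = τ⋆ / 2 + d²` turns each weight `2 (Λ_e - d_e²)` into `τ⋆_e`. Edges not incident to `i`
do not depend on `x_i`, so this is exactly `∇_{x_i} [τ⋆ᵀ Λ(x⋆)]`, and the primal stationarity
condition becomes the Nash stationarity of player `i`.
-/

/-- Normal cone of a convex set `C` at `x`. -/
def normalCone {H : Type*} [NormedAddCommGroup H] [InnerProductSpace ℝ H]
    (C : Set H) (x : H) : Set H :=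
  {e | ∀ y ∈ C, (inner ℝ e (y - x) : ℝ) ≤ 0}

theorem differentiable_update_apply {V 𝕜 E : Type*} [DecidableEq V] [NontriviallyNormedField 𝕜]
    [NormedAddCommGroup E] [NormedSpace 𝕜 E] (p : V → E) (v u : V) :
    Differentiable 𝕜 (fun y => Function.update p v y u) := by
  rcases eq_or_ne u v with rfl | huv
  · simp
  · simp [Function.update_of_ne huv]

theorem differentiable_norm_sq_update_sub {V H : Type*} [DecidableEq V] [NormedAddCommGroup H]
    [InnerProductSpace ℝ H] (p : V → H) (v u w : V) :
    Differentiable ℝ (fun y => ‖Function.update p v y u - Function.update p v y w‖ ^ 2) :=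
  ((differentiable_update_apply p v u).sub (differentiable_update_apply p v w)).norm_sq ℝ

section SumOfSquares

variable {ι E : Type*} [NormedAddCommGroup E] [NormedSpace ℝ E] {f : ι → E → ℝ} {x : E}

theorem fderiv_sum_sq_sub (S : Finset ι) (c : ι → ℝ) (hf : ∀ e ∈ S, DifferentiableAt ℝ (f e) x) :
    fderiv ℝ (fun y => ∑ e ∈ S, (f e y - c e) ^ 2) x
      = ∑ e ∈ S, (2 * (f e x - c e)) • fderiv ℝ (f e) x := by
  rw [fderiv_fun_sum fun e he => ((hf e he).sub_const _).fun_pow 2]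
  refine sum_congr rfl fun e he => ?_
  rw [fderiv_fun_pow 2 ((hf e he).sub_const _), fderiv_sub_const]
  norm_num

theorem fderiv_sum_mul [Fintype ι] (τ : ι → ℝ) (hf : ∀ e, DifferentiableAt ℝ (f e) x) :
    fderiv ℝ (fun y => ∑ e, τ e * f e y) x = ∑ e, τ e • fderiv ℝ (f e) x := by
  rw [fderiv_fun_sum fun e _ => (hf e).const_mul (τ e)]
  exact sum_congr rfl fun e _ => fderiv_const_mul (hf e) (τ e)

theorem fderiv_sum_sq_sub_eq_fderiv_sum_mul [Fintype ι] (S : Finset ι) (c τ : ι → ℝ)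
    (hf : ∀ e, DifferentiableAt ℝ (f e) x) (hτ : ∀ e ∈ S, f e x = τ e / 2 + c e)
    (hS : ∀ e ∉ S, fderiv ℝ (f e) x = 0) :
    fderiv ℝ (fun y => ∑ e ∈ S, (f e y - c e) ^ 2) x = fderiv ℝ (fun y => ∑ e, τ e * f e y) x := by
  rw [fderiv_sum_sq_sub S c fun e _ => hf e, fderiv_sum_mul τ hf,
    ← sum_subset (subset_univ S) fun e _ he => by rw [hS e he, smul_zero]]
  refine sum_congr rfl fun e he => ?_
  rw [hτ e he]
  congr 1
  ring

end SumOfSquares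

theorem stmt9_general (n N M q : ℕ) (a : Fin M → EuclideanSpace ℝ (Fin n))
    (ep : Fin q → (Fin N ⊕ Fin M) × (Fin N ⊕ Fin M)) (d : Fin q → ℝ)
    (Ω : Fin N → Set (EuclideanSpace ℝ (Fin n)))
    (Λ : (Fin N → EuclideanSpace ℝ (Fin n)) → Fin q → ℝ)
    (hΛ : ∀ x e, Λ x e = ‖Sum.elim x a (ep e).1 - Sum.elim x a (ep e).2‖ ^ 2)
    (J : Fin N → (Fin N → EuclideanSpace ℝ (Fin n)) → ℝ)
    (hJ : ∀ i x, J i x =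
      ∑ e ∈ Finset.univ.filter
        (fun e => (ep e).1 = Sum.inl i ∨ (ep e).2 = Sum.inl i),
        (Λ x e - (d e) ^ 2) ^ 2)
    (xs : Fin N → EuclideanSpace ℝ (Fin n))
    (τs : Fin q → ℝ)
    (hstat1 : ∀ i,
      -gradient (fun y => ∑ e, τs e * Λ (Function.update xs i y) e) (xs i)
        ∈ normalCone (Ω i) (xs i))
    (hstat2 : ∀ e, Λ xs e = τs e / 2 + (d e) ^ 2) :
    ∀ i, -gradient (fun y => J i (Function.update xs i y)) (xs i)
      ∈ normalCone (Ω i) (xs i) := by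
  intro i
  set S := Finset.univ.filter fun e => (ep e).1 = Sum.inl i ∨ (ep e).2 = Sum.inl i
  set f : Fin q → EuclideanSpace ℝ (Fin n) → ℝ := fun e y => Λ (Function.update xs i y) e
  have hf_eq : ∀ e y, f e y = ‖Function.update (Sum.elim xs a) (.inl i) y (ep e).1
      - Function.update (Sum.elim xs a) (.inl i) y (ep e).2‖ ^ 2 := fun e y => by
    simp only [f, hΛ, Sum.elim_update_left]
  have hf_diff : ∀ e, DifferentiableAt ℝ (f e) (xs i) := fun e => by
    simpa only [← hf_eq] using
      (differentiable_norm_sq_update_sub (Sum.elim xs a) (.inl i) (ep e).1 (ep e).2).differentiableAt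
  have hf_const : ∀ e ∉ S, fderiv ℝ (f e) (xs i) = 0 := fun e he => by
    obtain ⟨h₁, h₂⟩ := not_or.mp (by simpa [S] using he)
    have : f e = fun _ => ‖Sum.elim xs a (ep e).1 - Sum.elim xs a (ep e).2‖ ^ 2 := by
      funext y; rw [hf_eq, Function.update_of_ne h₁, Function.update_of_ne h₂]
    rw [this, fderiv_const_apply]
  have hJ_eq : (fun y => J i (Function.update xs i y)) = fun y => ∑ e ∈ S, (f e y - d e ^ 2) ^ 2 :=
    funext fun y => hJ i _
  have hτ : ∀ e ∈ S, f e (xs i) = τs e / 2 + d e ^ 2 := fun e _ => by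
    simp only [f, Function.update_eq_self, hstat2]
  have hgrad : gradient (fun y => J i (Function.update xs i y)) (xs i)
      = gradient (fun y => ∑ e, τs e * f e y) (xs i) := by
    rw [gradient, gradient, hJ_eq, fderiv_sum_sq_sub_eq_fderiv_sum_mul S _ τs hf_diff hτ hf_const]
  exact hgrad ▸ hstat1 i

/-- Theorem 1: if `(x⋆, τ⋆)` is a stationary point of the complementary function
`Ψ(x, τ) = τᵀΛ(x) − Φ*(τ)` (i.e. `0 ∈ ∇ₓ[τ⋆ᵀΛ(x⋆)] + N_Ω(x⋆)` and `Λ(x⋆) = ∇Φ*(τ⋆)`),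
then `x⋆` is a Nash stationary point of the SNL game. -/
theorem stmt9 (n N M q : ℕ) (a : Fin M → EuclideanSpace ℝ (Fin n))
    (ep : Fin q → (Fin N ⊕ Fin M) × (Fin N ⊕ Fin M)) (d : Fin q → ℝ)
    (Ω : Fin N → Set (EuclideanSpace ℝ (Fin n)))
    (hΩconv : ∀ i, Convex ℝ (Ω i)) (hΩcomp : ∀ i, IsCompact (Ω i))
    (Λ : (Fin N → EuclideanSpace ℝ (Fin n)) → Fin q → ℝ)
    (hΛ : ∀ x e, Λ x e = ‖Sum.elim x a (ep e).1 - Sum.elim x a (ep e).2‖ ^ 2)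
    (J : Fin N → (Fin N → EuclideanSpace ℝ (Fin n)) → ℝ)
    (hJ : ∀ i x, J i x =
      ∑ e ∈ Finset.univ.filter
        (fun e => (ep e).1 = Sum.inl i ∨ (ep e).2 = Sum.inl i),
        (Λ x e - (d e) ^ 2) ^ 2)
    (xs : Fin N → EuclideanSpace ℝ (Fin n)) (hxs : ∀ i, xs i ∈ Ω i)
    (τs : Fin q → ℝ)
    (hstat1 : ∀ i,
      -gradient (fun y => ∑ e, τs e * Λ (Function.update xs i y) e) (xs i)
        ∈ normalCone (Ω i) (xs i))
    (hstat2 : ∀ e, Λ xs e = τs e / 2 + (d e) ^ 2) :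
    ∀ i, -gradient (fun y => J i (Function.update xs i y)) (xs i)
      ∈ normalCone (Ω i) (xs i) :=
  stmt9_general n N M q a ep d Ω Λ hΛ J hJ xs τs hstat1 hstat2
end
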